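/- For every integer b ≥ 3, the tree H²(b-2, b-1; b, b+1) — obtained from two branching vertices z_3 and z_1 joined by a path z_3 z_2 z_1 of length 2, where z_1 carries two additional pendant paths of lengths b and b+1, and z_3 carries two additional pendant paths of lengths b-2 and b-1 — is a transmission irregular tree of order 4b + 1. -/

import Mathlib

/-- The transmission of a vertex: sum of distances to all other vertices. -/
noncomputable def transmission {V : Type*} [Fintype V] (G : SimpleGraph V) (v : V) : ℕ :=
  ∑ u : V, G.dist v u

/-- Arm lengths of `H²(b-2, b-1; b, b+1)`: arms `b` and `b+1` at `z₁`,
arms `b-2` and `b-1` at `z₃`. -/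
def armLen (b : ℕ) : Fin 4 → ℕ := ![b, b + 1, b - 2, b - 1]

/-- Vertex set: `Fin 3` is the central path `z₁ z₂ z₃` (as `0 1 2`), and `⟨i, j⟩` is the
`(j+1)`-st vertex on the `i`-th pendant arm. -/
abbrev HVert (b : ℕ) : Type := Fin 3 ⊕ (Σ i : Fin 4, Fin (armLen b i))

/-- Which central vertex each arm is attached to: arms 0, 1 at `z₁ = 0`, arms 2, 3 at `z₃ = 2`. -/
def armRoot : Fin 4 → Fin 3 := ![0, 0, 2, 2]

/-- The tree `H²(b-2, b-1; b, b+1)`: a central path `z₁ z₂ z₃`, pendant paths of lengths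
`b` and `b+1` attached at `z₁`, and pendant paths of lengths `b-2` and `b-1` attached at `z₃`. -/
def Htree (b : ℕ) : SimpleGraph (HVert b) :=
  SimpleGraph.fromRel (fun x y =>
    match x, y with
    | Sum.inl c, Sum.inl c' => ((c : ℕ) = 0 ∧ (c' : ℕ) = 1) ∨ ((c : ℕ) = 1 ∧ (c' : ℕ) = 2)
    | Sum.inl c, Sum.inr q => c = armRoot q.1 ∧ (q.2 : ℕ) = 0
    | Sum.inr q, Sum.inr q' => q.1 = q'.1 ∧ (q'.2 : ℕ) = (q.2 : ℕ) + 1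
    | _, _ => False)

/-! Distances in `Htree b` are given by an explicit formula `htreeDist`, certified by the facts
that it changes by at most one along edges and that from every vertex some edge decreases it.
Summing it, the transmissions of `z₁, z₂, z₃` are `K, K + 3, K + 8` with `K = 2b² + 4b - 1`,
and the vertex at distance `x ≥ 1` from the hub of arm `i` has transmission
`K + x² + 2 sᵢ x + eᵢ` with `s = (b, b - 1, b + 2, b + 1)` and `e = (0, 0, 8, 8)`. These
quadratics are strictly increasing in `x` and the values of different arms interleave, so no
two vertices share a transmission. The graph is a tree since every vertex but `z₁` has exactly
one parent. -/

namespace SimpleGraph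

variable {V : Type*}

theorem dist_eq_of_adj_le_of_exists_adj {G : SimpleGraph V} (d : V → V → ℕ) (hself : ∀ v, d v v = 0)
    (hlip : ∀ ⦃x y⦄, G.Adj x y → ∀ u, d x u ≤ d y u + 1)
    (hstep : ∀ ⦃v u⦄, v ≠ u → ∃ w, G.Adj v w ∧ d w u + 1 = d v u) (v u : V) :
    G.dist v u = d v u := by
  have le_length : ∀ {v} (p : G.Walk v u), d v u ≤ p.length := by
    intro v p
    induction p with
    | nil => simp [hself]
    | cons h p ih => simpa using (hlip h _).trans (Nat.add_le_add_right ih 1)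
  have exists_walk : ∀ n v, d v u = n → ∃ p : G.Walk v u, p.length = n := by
    intro n
    induction n with
    | zero =>
      intro v h
      obtain rfl : v = u := by_contra fun hvu => by obtain ⟨w, -, hw⟩ := hstep hvu; omega
      exact ⟨.nil, rfl⟩
    | succ n ih =>
      intro v h
      obtain ⟨w, hadj, hw⟩ := hstep (v := v) (u := u) fun hvu => by subst hvu; simp [hself] at h
      obtain ⟨p, hp⟩ := ih w (by omega)
      exact ⟨.cons hadj p, by simp [hp]⟩
  obtain ⟨p, hp⟩ := exists_walk _ v rfl
  obtain ⟨q, hq⟩ := p.reachable.exists_walk_length_eq_dist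
  exact le_antisymm (hp ▸ dist_le p) (hq ▸ le_length q)

theorem isTree_fromRel_of_unique_pred [Finite V] {r : V → V → Prop} (root : V) (rank : V → ℕ)
    (hrank : ∀ ⦃x y⦄, r x y → rank x < rank y) (hroot : ∀ x, ¬ r x root)
    (hpred : ∀ y, y ≠ root → ∃ x, r x y) (hunique : ∀ ⦃x x' y⦄, r x y → r x' y → x = x') :
    (fromRel r).IsTree := by
  classical
  have adj_of_rel : ∀ ⦃x y⦄, r x y → (fromRel r).Adj x y := fun x y h =>
    (fromRel_adj r x y).mpr ⟨fun e => (hrank h).ne (congrArg rank e), Or.inl h⟩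
  have reach : ∀ v, (fromRel r).Reachable root v := by
    intro v
    induction hn : rank v using Nat.strong_induction_on generalizing v with
    | _ n ih =>
      by_cases hv : v = root
      · exact hv ▸ .rfl
      · obtain ⟨x, hx⟩ := hpred v hv
        exact (ih _ (hn ▸ hrank hx) x rfl).trans (adj_of_rel hx).reachable
  choose parent hparent using hpred
  let edge : {y // y ≠ root} → (fromRel r).edgeSet := fun y =>
    ⟨s(parent y y.2, y), adj_of_rel (hparent y y.2)⟩
  have edge_bij : Function.Bijective edge := by
    constructor
    · rintro ⟨y, hy⟩ ⟨y', hy'⟩ h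
      have h := congrArg Subtype.val h
      simp only [edge, Sym2.eq_iff] at h
      obtain ⟨-, rfl⟩ | ⟨h1, h2⟩ := h
      · rfl
      · have h3 := hrank (hparent y hy)
        have h4 := hrank (hparent y' hy')
        rw [h1] at h3; rw [← h2] at h4; omega
    · rintro ⟨e, he⟩
      induction e using Sym2.ind with
      | _ x y =>
        obtain ⟨-, h | h⟩ := (fromRel_adj r x y).mp he
        · have hy : y ≠ root := fun e => hroot x (e ▸ h)
          refine ⟨⟨y, hy⟩, Subtype.ext ?_⟩
          show s(parent y hy, y) = _
          rw [hunique (hparent y hy) h]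
        · have hx : x ≠ root := fun e => hroot y (e ▸ h)
          refine ⟨⟨x, hx⟩, Subtype.ext ?_⟩
          show s(parent x hx, x) = _
          rw [hunique (hparent x hx) h, Sym2.eq_swap]
  rw [isTree_iff_connected_and_card]
  refine ⟨@Connected.mk _ _ (fun u v => (reach u).symm.trans (reach v)) ⟨root⟩, ?_⟩
  rw [← Nat.card_congr (Equiv.ofBijective edge edge_bij), ← Finite.card_option,
    Nat.card_congr (Equiv.optionSubtypeNe root)]

end SimpleGraph

open SimpleGraph Finset

section

variable {b : ℕ}

def htreeChild (b : ℕ) : HVert b → HVert b → Prop := fun x y =>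
  match x, y with
  | Sum.inl c, Sum.inl c' => ((c : ℕ) = 0 ∧ (c' : ℕ) = 1) ∨ ((c : ℕ) = 1 ∧ (c' : ℕ) = 2)
  | Sum.inl c, Sum.inr q => c = armRoot q.1 ∧ (q.2 : ℕ) = 0
  | Sum.inr q, Sum.inr q' => q.1 = q'.1 ∧ (q'.2 : ℕ) = (q.2 : ℕ) + 1
  | _, _ => False

theorem htree_eq_fromRel (b : ℕ) : Htree b = fromRel (htreeChild b) := rfl

def htreeDepth : HVert b → ℕ
  | .inl c => c
  | .inr q => armRoot q.1 + q.2 + 1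

theorem htreeDepth_lt_of_child {x y : HVert b} (h : htreeChild b x y) :
    htreeDepth x < htreeDepth y := by
  rcases x with c | ⟨i, j⟩ <;> rcases y with c' | ⟨i', j'⟩ <;>
    simp only [htreeChild, htreeDepth] at h ⊢
  · omega
  · obtain ⟨rfl, -⟩ := h; omega
  · obtain ⟨rfl, h⟩ := h; omega

theorem htree_adj_of_child {x y : HVert b} (h : htreeChild b x y) : (Htree b).Adj x y :=
  (fromRel_adj _ x y).mpr ⟨fun e => (htreeDepth_lt_of_child h).ne (congrArg _ e), Or.inl h⟩

theorem isTree_htree (b : ℕ) : (Htree b).IsTree := by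
  rw [htree_eq_fromRel]
  refine isTree_fromRel_of_unique_pred (.inl 0) htreeDepth ?_ ?_ ?_ ?_
  · exact fun _ _ => htreeDepth_lt_of_child
  · rintro (c | ⟨i, j⟩) h <;> simp only [htreeChild, Fin.isValue, Fin.coe_ofNat_eq_mod] at h
    omega
  · rintro (c | ⟨i, j⟩) hy
    · fin_cases c
      · exact (hy rfl).elim
      · exact ⟨.inl 0, by simp [htreeChild]⟩
      · exact ⟨.inl 1, by simp [htreeChild]⟩
    · by_cases hj : (j : ℕ) = 0
      · exact ⟨.inl (armRoot i), rfl, hj⟩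
      · exact ⟨.inr ⟨i, ⟨j - 1, by omega⟩⟩, rfl, by simp only; omega⟩
  · rintro (c | ⟨i, j⟩) (c' | ⟨i', j'⟩) (c'' | ⟨i'', j''⟩) h h' <;>
      simp only [htreeChild] at h h' <;> try contradiction
    · exact congrArg _ (Fin.ext (by omega))
    · exact congrArg _ (h.1.trans h'.1.symm)
    · omega
    · omega
    · obtain ⟨rfl, h⟩ := h; obtain ⟨rfl, h'⟩ := h'
      exact congrArg _ (Sigma.ext rfl (heq_of_eq (Fin.ext (by dsimp only at h h' ⊢; omega))))

theorem htree_adj_hub (i : Fin 4) {j : Fin (armLen b i)} (hj : (j : ℕ) = 0) :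
    (Htree b).Adj (.inl (armRoot i)) (.inr ⟨i, j⟩) :=
  htree_adj_of_child ⟨rfl, hj⟩

theorem htree_adj_arm (i : Fin 4) {j j' : Fin (armLen b i)} (h : (j' : ℕ) = j + 1) :
    (Htree b).Adj (.inr ⟨i, j⟩) (.inr ⟨i, j'⟩) :=
  htree_adj_of_child ⟨rfl, h⟩

def htreeDist : HVert b → HVert b → ℕ
  | .inl c, .inl c' => Nat.dist c c'
  | .inl c, .inr q => Nat.dist c (armRoot q.1) + (q.2 + 1)
  | .inr q, .inl c => (q.2 + 1) + Nat.dist (armRoot q.1) c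
  | .inr q, .inr q' =>
    if q.1 = q'.1 then Nat.dist q.2 q'.2
    else (q.2 + 1) + Nat.dist (armRoot q.1) (armRoot q'.1) + (q'.2 + 1)

theorem htreeDist_le_of_child {x y : HVert b} (h : htreeChild b x y) (u : HVert b) :
    htreeDist x u ≤ htreeDist y u + 1 ∧ htreeDist y u ≤ htreeDist x u + 1 := by
  rcases x with c | ⟨i, j⟩ <;> rcases y with c' | ⟨i', j'⟩ <;> simp only [htreeChild] at h
  · rcases u with c'' | ⟨k, j''⟩ <;> simp only [htreeDist, Nat.dist] <;> omega
  · obtain ⟨rfl, hj⟩ := h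
    rcases u with c'' | ⟨k, j''⟩ <;> simp only [htreeDist, Nat.dist]
    · omega
    · split_ifs with hk
      · subst hk; omega
      · omega
  · obtain ⟨rfl, hj⟩ := h
    rcases u with c'' | ⟨k, j''⟩ <;> simp only [htreeDist, Nat.dist]
    · omega
    · split_ifs <;> omega

theorem exists_adj_inl_toward {c t : Fin 3} (h : c ≠ t) :
    ∃ c', (Htree b).Adj (.inl c) (.inl c') ∧ Nat.dist c' t + 1 = Nat.dist c t := by
  have hne : (c : ℕ) ≠ t := Fin.val_ne_of_ne h
  have := t.isLt
  rcases Nat.lt_or_gt_of_ne hne with hlt | hlt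
  · refine ⟨⟨c + 1, by omega⟩, htree_adj_of_child ?_, ?_⟩ <;>
      simp only [htreeChild, Nat.dist] <;> omega
  · refine ⟨⟨c - 1, by omega⟩, (htree_adj_of_child ?_).symm, ?_⟩ <;>
      simp only [htreeChild, Nat.dist] <;> omega

theorem exists_adj_toward_hub (i : Fin 4) (j : Fin (armLen b i)) :
    ∃ w, (Htree b).Adj (.inr ⟨i, j⟩) w ∧
      (∀ c, htreeDist w (.inl c) + 1 = htreeDist (.inr ⟨i, j⟩) (.inl c)) ∧
      ∀ k (j' : Fin (armLen b k)), (i = k → (j' : ℕ) < j) →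
        htreeDist w (.inr ⟨k, j'⟩) + 1 = htreeDist (.inr ⟨i, j⟩) (.inr ⟨k, j'⟩) := by
  by_cases hj : (j : ℕ) = 0
  · refine ⟨.inl (armRoot i), (htree_adj_hub i hj).symm, fun c => ?_, fun k j' hk => ?_⟩
    · simp only [htreeDist]; omega
    · have hik : i ≠ k := fun e => by have := hk e; omega
      simp only [htreeDist, if_neg hik]; omega
  · refine ⟨.inr ⟨i, ⟨j - 1, by omega⟩⟩, (htree_adj_arm i (by simp only; omega)).symm,
      fun c => ?_, fun k j' hk => ?_⟩
    · simp only [htreeDist]; omega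
    · simp only [htreeDist]
      split_ifs with hik
      · have := hk hik; simp only [Nat.dist]; omega
      · omega

theorem exists_adj_htreeDist_add_one_eq {v u : HVert b} (h : v ≠ u) :
    ∃ w, (Htree b).Adj v w ∧ htreeDist w u + 1 = htreeDist v u := by
  rcases v with c | ⟨i, j⟩ <;> rcases u with c' | ⟨k, j'⟩
  · obtain ⟨c'', hadj, hd⟩ := exists_adj_inl_toward (fun e => h (congrArg _ e))
    exact ⟨_, hadj, hd⟩
  · by_cases hc : c = armRoot k
    · refine ⟨.inr ⟨k, ⟨0, j'.pos⟩⟩, hc ▸ htree_adj_hub k rfl, ?_⟩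
      simp [htreeDist, hc, Nat.dist]
    · obtain ⟨c'', hadj, hd⟩ := exists_adj_inl_toward hc
      exact ⟨_, hadj, by simp only [htreeDist]; omega⟩
  · obtain ⟨w, hadj, hd, -⟩ := exists_adj_toward_hub i j
    exact ⟨w, hadj, hd c'⟩
  · by_cases hk : i = k ∧ (j : ℕ) < j'
    · obtain ⟨rfl, hjj⟩ := hk
      refine ⟨.inr ⟨i, ⟨j + 1, by have := j'.isLt; omega⟩⟩, htree_adj_arm i rfl, ?_⟩
      simp [htreeDist, Nat.dist]; omega
    · obtain ⟨w, hadj, -, hd⟩ := exists_adj_toward_hub i j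
      refine ⟨w, hadj, hd k j' fun hik => ?_⟩
      subst hik
      have hjj : (j : ℕ) ≠ j' := fun e => h (by rw [Fin.ext e])
      omega

theorem dist_htree (v u : HVert b) : (Htree b).dist v u = htreeDist v u := by
  refine dist_eq_of_adj_le_of_exists_adj _ (fun v => ?_) (fun x y hxy u => ?_)
    (fun _ _ => exists_adj_htreeDist_add_one_eq) v u
  · rcases v with c | ⟨i, j⟩ <;> simp [htreeDist]
  · obtain ⟨-, h | h⟩ := (fromRel_adj _ x y).mp hxy
    exacts [(htreeDist_le_of_child h u).1, (htreeDist_le_of_child h u).2]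

theorem two_mul_sum_range_add_succ (a L : ℕ) :
    2 * ∑ y ∈ range L, (a + (y + 1)) = L * (2 * a + L + 1) := by
  induction L with
  | zero => simp
  | succ L ih => rw [sum_range_succ, mul_add, ih]; ring

theorem two_mul_sum_range_dist (j r : ℕ) :
    2 * ∑ y ∈ range (j + 1 + r), Nat.dist j y = j * (j + 1) + r * (r + 1) := by
  have below : ∑ y ∈ range (j + 1), Nat.dist j y = ∑ y ∈ range j, (0 + (y + 1)) := by
    rw [← sum_range_reflect, sum_range_succ']
    refine (add_eq_left.mpr (by simp [Nat.dist])).trans (sum_congr rfl fun y hy => ?_)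
    simp only [mem_range] at hy
    simp only [Nat.dist]; omega
  have above : ∑ y ∈ range r, Nat.dist j (j + 1 + y) = ∑ y ∈ range r, (0 + (y + 1)) :=
    sum_congr rfl fun y _ => by simp only [Nat.dist]; omega
  rw [sum_range_add, mul_add, below, above, two_mul_sum_range_add_succ,
    two_mul_sum_range_add_succ]
  ring

theorem two_mul_sum_fin_add_succ (a L : ℕ) :
    2 * ∑ y : Fin L, (a + (y + 1 : ℕ)) = L * (2 * a + L + 1) := by
  rw [Fin.sum_univ_eq_sum_range (fun y => a + (y + 1)), two_mul_sum_range_add_succ]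

theorem two_mul_sum_fin_dist {L j r : ℕ} (hr : L = j + r + 1) :
    2 * ∑ y : Fin L, Nat.dist j y = j * (j + 1) + r * (r + 1) := by
  rw [Fin.sum_univ_eq_sum_range (Nat.dist j), hr, add_right_comm, two_mul_sum_range_dist]

/-- The excess of the transmission of the vertex at distance `x` from the hub of arm `i` over
that of `z₁`: a step outward from distance `x - 1` to `x` changes the transmission by
`2x - 1 + 2 (2b - armLen b i)`, and the transmission of `z₃` exceeds that of `z₁` by `8`. -/
def armExcess (b : ℕ) (i : Fin 4) (x : ℕ) : ℤ :=
  x ^ 2 + 2 * ![(b : ℤ), b - 1, b + 2, b + 1] i * x + ![0, 0, 8, 8] i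

theorem transmission_htree_eq_sum (v : HVert b) :
    transmission (Htree b) v =
      ∑ c, htreeDist v (.inl c) + ∑ k, ∑ y : Fin (armLen b k), htreeDist v (.inr ⟨k, y⟩) := by
  simp only [transmission, dist_htree, Fintype.sum_sum_type, Fintype.sum_sigma]

theorem two_mul_transmission_htree_inl (c : Fin 3) :
    2 * transmission (Htree b) (.inl c) = 2 * ∑ c' : Fin 3, Nat.dist c c' +
      ∑ k, armLen b k * (2 * Nat.dist c (armRoot k) + armLen b k + 1) := by
  rw [transmission_htree_eq_sum, mul_add]
  congr 1
  rw [mul_sum]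
  exact sum_congr rfl fun k _ => two_mul_sum_fin_add_succ (Nat.dist c (armRoot k)) _

theorem two_mul_transmission_htree_inr (i : Fin 4) (j : Fin (armLen b i)) {r : ℕ}
    (hr : armLen b i = j + r + 1) :
    2 * transmission (Htree b) (.inr ⟨i, j⟩) =
      2 * ∑ c : Fin 3, (j + 1 + Nat.dist (armRoot i) c) +
      ∑ k, if i = k then j * (j + 1) + r * (r + 1)
        else armLen b k * (2 * (j + 1 + Nat.dist (armRoot i) (armRoot k)) + armLen b k + 1) := by
  rw [transmission_htree_eq_sum, mul_add]
  congr 1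
  rw [mul_sum]
  refine sum_congr rfl fun k _ => ?_
  by_cases hik : i = k
  · subst hik; simp only [htreeDist, if_true, two_mul_sum_fin_dist hr]
  · simp only [htreeDist, if_neg hik, two_mul_sum_fin_add_succ]

theorem transmission_htree_inl (hb : 2 ≤ b) (c : Fin 3) :
    (transmission (Htree b) (.inl c) : ℤ) = 2 * b ^ 2 + 4 * b - 1 + ![0, 3, 8] c := by
  have h := two_mul_transmission_htree_inl (b := b) c
  obtain ⟨m, rfl⟩ : ∃ m, b = m + 2 := ⟨b - 2, by omega⟩
  fin_cases c <;>
    simp [Fin.sum_univ_three, Fin.sum_univ_four, armLen, armRoot, Nat.dist] at h ⊢ <;>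
    (have h := congrArg (Nat.cast : ℕ → ℤ) h; push_cast at h; linarith)

theorem transmission_htree_inr (hb : 2 ≤ b) (i : Fin 4) (j : Fin (armLen b i)) :
    (transmission (Htree b) (.inr ⟨i, j⟩) : ℤ) =
      2 * b ^ 2 + 4 * b - 1 + armExcess b i (j + 1) := by
  obtain ⟨r, hr⟩ := Nat.exists_eq_add_of_lt j.isLt
  have h := congrArg (Nat.cast : ℕ → ℤ) (two_mul_transmission_htree_inr i j hr)
  have hr' : (r : ℤ) = armLen b i - j - 1 := by omega
  obtain ⟨m, rfl⟩ : ∃ m, b = m + 2 := ⟨b - 2, by omega⟩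
  fin_cases i <;>
    simp [Fin.sum_univ_three, Fin.sum_univ_four, armLen, armRoot, Nat.dist, armExcess]
      at h hr' ⊢ <;>
    rw [hr'] at h <;> linarith

theorem armExcess_strictMono (hb : 1 ≤ b) (i : Fin 4) : StrictMono (armExcess b i) := by
  refine strictMono_nat_of_lt_succ fun x => ?_
  have hb' : (1 : ℤ) ≤ b := by exact_mod_cast hb
  fin_cases i <;> simp [armExcess] <;> nlinarith

theorem armExcess_ne_central (hb : 3 ≤ b) (i : Fin 4) {x : ℕ} (hx : 1 ≤ x) (c : Fin 3) :
    armExcess b i x ≠ ![0, 3, 8] c := by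
  have hb' : (3 : ℤ) ≤ b := by exact_mod_cast hb
  have hc : ![(0 : ℤ), 3, 8] c ≤ 8 ∧ ![(0 : ℤ), 3, 8] c ≠ 2 * b - 1 ∧
      ![(0 : ℤ), 3, 8] c ≠ 2 * b + 1 := by
    fin_cases c <;> simp <;> omega
  rcases hx.eq_or_lt with rfl | hx
  · fin_cases i <;> simp [armExcess] <;> omega
  · have := (armExcess_strictMono (b := b) (by omega) i).monotone hx
    fin_cases i <;> simp [armExcess] at this ⊢ <;> linarith

theorem armExcess_lt_armExcess_iff (hb : 1 ≤ b) (i : Fin 4) {x y : ℕ} :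
    armExcess b i x < armExcess b i y ↔ x < y :=
  (armExcess_strictMono hb i).lt_iff_lt

/-- Each value of one of the two arms falls strictly between two values of the other whose
distances differ by at most three; the values in between are excluded by parity, or (arms 1
and 2) by the length `b - 2` of arm 2. -/
theorem armExcess_ne_of_lt (hb : 3 ≤ b) {i k : Fin 4} (hik : i < k) {x y : ℕ} (hx : 1 ≤ x)
    (hy : 1 ≤ y) (hyL : y ≤ armLen b k) : armExcess b i x ≠ armExcess b k y := by
  have hb' : (3 : ℤ) ≤ b := by exact_mod_cast hb
  have lt_iff := armExcess_lt_armExcess_iff (b := b) (by omega)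
  intro h
  fin_cases i <;> fin_cases k <;> simp only [Fin.lt_def] at hik <;> try omega
  all_goals simp [armExcess] at h
  · obtain ⟨n, rfl⟩ : ∃ n, y = n + 1 := ⟨y - 1, by omega⟩
    have h1 : n < x := (lt_iff 0).mp (by simp [armExcess]; push_cast at h; linarith)
    have h2 : x < n + 1 := (lt_iff 0).mp (by simp [armExcess]; push_cast at h; linarith)
    omega
  · have h1 : y < x := (lt_iff 0).mp (by simp [armExcess]; linarith)
    have h2 : x < y + 2 := (lt_iff 0).mp (by simp [armExcess]; linarith)
    obtain rfl : x = y + 1 := by omega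
    push_cast at h
    have : (2 * b : ℤ) = 2 * y + 7 := by linarith
    omega
  · have h1 : y < x := (lt_iff 0).mp (by simp [armExcess]; linarith)
    have h2 : x < y + 2 := (lt_iff 0).mp (by simp [armExcess]; linarith)
    obtain rfl : x = y + 1 := by omega
    push_cast at h
    have : (2 * b : ℤ) = 7 := by linarith
    omega
  · have h1 : y < x := (lt_iff 1).mp (by simp [armExcess]; linarith)
    have h2 : x < y + 3 := (lt_iff 1).mp (by simp [armExcess]; linarith)
    simp [armLen] at hyL
    obtain rfl | rfl : x = y + 1 ∨ x = y + 2 := by omega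
    · push_cast at h
      have : (2 * b : ℤ) = 4 * y + 9 := by linarith
      omega
    · push_cast at h
      have : (2 * y : ℤ) = 4 * b - 8 := by linarith
      omega
  · have h1 : y < x := (lt_iff 1).mp (by simp [armExcess]; linarith)
    have h2 : x < y + 2 := (lt_iff 1).mp (by simp [armExcess]; linarith)
    obtain rfl : x = y + 1 := by omega
    push_cast at h
    have : (2 * b : ℤ) = 2 * y + 9 := by linarith
    omega
  · have h1 : x < y := (lt_iff 3).mp (by simp [armExcess]; linarith)
    have h2 : y < x + 1 := (lt_iff 3).mp (by simp [armExcess]; linarith)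
    omega

theorem card_HVert (hb : 2 ≤ b) : Fintype.card (HVert b) = 4 * b + 1 := by
  simp only [Fintype.card_sum, Fintype.card_sigma, Fin.sum_univ_four, Fintype.card_fin]
  simp [armLen]
  omega

theorem transmission_htree_injective (hb : 3 ≤ b) :
    Function.Injective (transmission (Htree b)) := by
  intro v u h
  have h := congrArg (Nat.cast : ℕ → ℤ) h
  rcases v with c | ⟨i, j⟩ <;> rcases u with c' | ⟨k, j'⟩ <;>
    simp only [transmission_htree_inl (by omega : 2 ≤ b),
      transmission_htree_inr (by omega : 2 ≤ b)] at h
  · have h : ![(0 : ℤ), 3, 8] c = ![0, 3, 8] c' := by linarith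
    fin_cases c <;> fin_cases c' <;> simp at h ⊢
  · exact absurd (by linarith) (armExcess_ne_central hb k (Nat.le_add_left 1 j') c)
  · exact absurd (by linarith) (armExcess_ne_central hb i (Nat.le_add_left 1 j) c')
  · have h : armExcess b i (j + 1) = armExcess b k (j' + 1) := by linarith
    obtain hik | rfl | hik := lt_trichotomy i k
    · exact absurd h (armExcess_ne_of_lt hb hik (by omega) (by omega) j'.isLt)
    · have := (armExcess_strictMono (by omega) i).injective h
      exact congrArg _ (Sigma.ext rfl (heq_of_eq (Fin.ext (by dsimp only; omega))))
    · exact absurd h.symm (armExcess_ne_of_lt hb hik (by omega) (by omega) j.isLt)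

end

/-- For every `b ≥ 3`, the tree `H²(b-2, b-1; b, b+1)` is a transmission irregular
tree of order `4b + 1`. -/
theorem stmt_8 (b : ℕ) (hb : 3 ≤ b) :
    Fintype.card (HVert b) = 4 * b + 1 ∧ (Htree b).IsTree ∧
      Function.Injective (transmission (Htree b)) :=
  ⟨card_HVert (by omega), isTree_htree b, transmission_htree_injective hb⟩
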